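/- arXiv:2604.06412 — 4 statements merged into one kernel-verified Lean document; each statement's English description precedes it below -/
import Mathlib

section
/- The only solution (x₀, x₁, x₂) ∈ ℂ³ of the system {−3x₀² − 11x₀x₁ + x₀x₂ + 42x₁² + x₁x₂ = 0, 3x₀² + 21x₀x₁ − x₀x₂ − 57x₁² − 6x₁x₂ = 0, 25x₀x₁ − x₀x₂ − 6x₁x₂ = 0, −6x₀² + 23x₀x₁ + 5x₀x₂ − 21x₁² − 10x₁x₂ − x₂² = 0, −15x₀² + 35x₀x₁ + 5x₀x₂ − x₂² = 0, 15x₀² − 35x₀x₁ − 3x₀x₂ − 3x₁x₂ = 0} is x₀ = x₁ = x₂ = 0. -/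
theorem quadratic_system_A_BC_only_trivial_solution (x₀ x₁ x₂ : ℂ)
    (h1 : -3*x₀^2 - 11*x₀*x₁ + x₀*x₂ + 42*x₁^2 + x₁*x₂ = 0)
    (h2 : 3*x₀^2 + 21*x₀*x₁ - x₀*x₂ - 57*x₁^2 - 6*x₁*x₂ = 0)
    (h3 : 25*x₀*x₁ - x₀*x₂ - 6*x₁*x₂ = 0)
    (h4 : -6*x₀^2 + 23*x₀*x₁ + 5*x₀*x₂ - 21*x₁^2 - 10*x₁*x₂ - x₂^2 = 0)
    (h5 : -15*x₀^2 + 35*x₀*x₁ + 5*x₀*x₂ - x₂^2 = 0)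
    (h6 : 15*x₀^2 - 35*x₀*x₁ - 3*x₀*x₂ - 3*x₁*x₂ = 0) :
    x₀ = 0 ∧ x₁ = 0 ∧ x₂ = 0 := by
  have k1 : x₁ * (2*x₀ - 3*x₁ - x₂) = 0 := by linear_combination (h1 + h2) / 5
  have k2 : x₂ * (2*x₀ - 3*x₁ - x₂) = 0 := by linear_combination h5 + h6
  rcases mul_eq_zero.mp k1 with hx1 | hfac
  · subst hx1
    rcases mul_eq_zero.mp k2 with hx2 | hfac
    · subst hx2
      have hx0 : x₀ = 0 := by
        have h : x₀ ^ 2 = 0 := by linear_combination -h5/15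
        exact pow_eq_zero_iff (n := 2) (by norm_num) |>.mp h
      exact ⟨hx0, rfl, rfl⟩
    · have hx2 : x₂ = 2*x₀ := by linear_combination -hfac
      subst hx2
      have hx0 : x₀ = 0 := by
        have h : x₀ ^ 2 = 0 := by linear_combination -h5/9
        exact pow_eq_zero_iff (n := 2) (by norm_num) |>.mp h
      exact ⟨hx0, rfl, by rw [hx0, mul_zero]⟩
  · have hx2 : x₂ = 2*x₀ - 3*x₁ := by linear_combination -hfac
    subst hx2
    have p : x₀^2 - 8*x₀*x₁ - 9*x₁^2 = 0 := by linear_combination -h3/2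
    have q : 9*x₀^2 - 32*x₀*x₁ + 9*x₁^2 = 0 := by linear_combination h6
    have r : x₁ * (4*x₀ + 9*x₁) = 0 := by linear_combination (q - 9*p)/10
    rcases mul_eq_zero.mp r with hx1 | hr
    · subst hx1
      have hx0 : x₀ = 0 := by
        have h : x₀ ^ 2 = 0 := by linear_combination p
        exact pow_eq_zero_iff (n := 2) (by norm_num) |>.mp h
      exact ⟨hx0, rfl, by rw [hx0]; ring⟩
    · have hx1 : x₁ = 0 := by
        have h : x₁ ^ 2 = 0 := by linear_combination 16/225*p - (4*x₀-41*x₁)/225*hr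
        exact pow_eq_zero_iff (n := 2) (by norm_num) |>.mp h
      have hx0 : x₀ = 0 := by linear_combination hr/4 - 9/4*hx1
      exact ⟨hx0, hx1, by rw [hx0, hx1]; ring⟩
end

section
/- The only solution (x₀, x₁, x₂) ∈ ℂ³ of the system {3x₀² + 21x₀x₁ − x₀x₂ − 57x₁² − 6x₁x₂ = 0, −5x₀² − 30x₀x₁ + 2x₀x₂ − 3x₁x₂ = 0, −6x₀² + 23x₀x₁ + x₀x₂ − 21x₁² − 9x₁x₂ = 0, −25x₀x₁ − 3x₀x₂ + 7x₁x₂ + x₂² = 0, 9x₀² − 42x₀x₁ − 6x₀x₂ + 49x₁² + 9x₁x₂ + x₂² = 0, −15x₀² + 35x₀x₁ + 5x₀x₂ − x₂² = 0} is x₀ = x₁ = x₂ = 0. -/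
theorem quadratic_system_B_CA_only_trivial_solution (x₀ x₁ x₂ : ℂ)
    (h1 : 3*x₀^2 + 21*x₀*x₁ - x₀*x₂ - 57*x₁^2 - 6*x₁*x₂ = 0)
    (h2 : -5*x₀^2 - 30*x₀*x₁ + 2*x₀*x₂ - 3*x₁*x₂ = 0)
    (h3 : -6*x₀^2 + 23*x₀*x₁ + x₀*x₂ - 21*x₁^2 - 9*x₁*x₂ = 0)
    (h4 : -25*x₀*x₁ - 3*x₀*x₂ + 7*x₁*x₂ + x₂^2 = 0)
    (h5 : 9*x₀^2 - 42*x₀*x₁ - 6*x₀*x₂ + 49*x₁^2 + 9*x₁*x₂ + x₂^2 = 0)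
    (h6 : -15*x₀^2 + 35*x₀*x₁ + 5*x₀*x₂ - x₂^2 = 0) :
    x₀ = 0 ∧ x₁ = 0 ∧ x₂ = 0 := by
  have e0 : x₀^2 = 0 := by
    linear_combination (-7/100)*h1 + (-23/400)*h2 + (-3/80)*h3 + (-3/400)*h4
      + (-39/400)*h5 + (-21/200)*h6
  have e1 : x₁^2 = 0 := by
    linear_combination (-1/50)*h1 + (-3/400)*h2 + (1/80)*h3 + (-3/400)*h4
      + (1/400)*h5 + (-1/200)*h6
  have e2 : x₂^2 = 0 := by
    linear_combination (-7/4)*h1 + (-15/16)*h2 + (13/16)*h3 + (21/16)*h4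
      + (-27/16)*h5 + (-11/8)*h6
  exact ⟨pow_eq_zero_iff two_ne_zero |>.mp e0,
         pow_eq_zero_iff two_ne_zero |>.mp e1,
         pow_eq_zero_iff two_ne_zero |>.mp e2⟩
end

section
/- The only solution (x₀, x₁, x₂) ∈ ℂ³ of the system {−5x₀² − 30x₀x₁ + 2x₀x₂ − 3x₁x₂ = 0, −3x₀² − 11x₀x₁ + x₀x₂ + 42x₁² + x₁x₂ = 0, −4x₀x₂ + x₁x₂ + x₂² = 0, 6x₀² + 2x₀x₁ − 2x₀x₂ + 21x₁² + 3x₁x₂ = 0, 15x₀² − 35x₀x₁ − 3x₀x₂ − 3x₁x₂ = 0, 9x₀² − 42x₀x₁ − 6x₀x₂ + 49x₁² + 9x₁x₂ + x₂² = 0} is x₀ = x₁ = x₂ = 0. -/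
theorem quadratic_system_C_AB_only_trivial_solution (x₀ x₁ x₂ : ℂ)
    (h1 : -5*x₀^2 - 30*x₀*x₁ + 2*x₀*x₂ - 3*x₁*x₂ = 0)
    (h2 : -3*x₀^2 - 11*x₀*x₁ + x₀*x₂ + 42*x₁^2 + x₁*x₂ = 0)
    (h3 : -4*x₀*x₂ + x₁*x₂ + x₂^2 = 0)
    (h4 : 6*x₀^2 + 2*x₀*x₁ - 2*x₀*x₂ + 21*x₁^2 + 3*x₁*x₂ = 0)
    (h5 : 15*x₀^2 - 35*x₀*x₁ - 3*x₀*x₂ - 3*x₁*x₂ = 0)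
    (h6 : 9*x₀^2 - 42*x₀*x₁ - 6*x₀*x₂ + 49*x₁^2 + 9*x₁*x₂ + x₂^2 = 0) :
    x₀ = 0 ∧ x₁ = 0 ∧ x₂ = 0 := by
  have e0 : x₀^2 = 0 := by
    linear_combination (-59/100)*h1 + (27/100)*h2 + (-3/20)*h3 + (-89/100)*h4 + (19/100)*h5 + (3/20)*h6
  have e1 : x₁^2 = 0 := by
    linear_combination (-3/700)*h1 + (19/700)*h2 + (1/140)*h3 + (1/100)*h4 + (3/700)*h5 + (-1/140)*h6
  have e2 : x₂^2 = 0 := by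
    linear_combination (-33/4)*h1 + (17/4)*h2 + (-5/4)*h3 + (-55/4)*h4 + (9/4)*h5 + (9/4)*h6
  exact ⟨pow_eq_zero_iff two_ne_zero |>.mp e0, pow_eq_zero_iff two_ne_zero |>.mp e1,
    pow_eq_zero_iff two_ne_zero |>.mp e2⟩
end

section
/- In ℂ² ⊗ ℂ⁴, the three vectors |ψ₀⟩ = |0⟩⊗(|0⟩ − 2|2⟩ − 5|3⟩) − 3|1⟩⊗(|1⟩ − |2⟩), |ψ₁⟩ = 6|0⟩⊗|0⟩ + 3|0⟩⊗|2⟩ + 5|1⟩⊗|0⟩ + 7|1⟩⊗(|1⟩ − |2⟩), |ψ₂⟩ = |0⟩⊗|1⟩ − |1⟩⊗|3⟩ + |1⟩⊗(|1⟩ − |2⟩) span a subspace containing no nonzero product vector u ⊗ v. -/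
/-- Coefficient matrix (in the basis `|k⟩⊗|l⟩`, `k ∈ Fin 2`, `l ∈ Fin 4`) of
`|ψ₀⟩ = |0⟩⊗(|0⟩ − 2|2⟩ − 5|3⟩) − 3|1⟩⊗(|1⟩ − |2⟩)`. -/
noncomputable def ψ0 : Matrix (Fin 2) (Fin 4) ℂ :=
  !![1, 0, -2, -5;
     0, -3, 3, 0]

/-- Coefficient matrix of
`|ψ₁⟩ = 6|0⟩⊗|0⟩ + 3|0⟩⊗|2⟩ + 5|1⟩⊗|0⟩ + 7|1⟩⊗(|1⟩ − |2⟩)`. -/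
noncomputable def ψ1 : Matrix (Fin 2) (Fin 4) ℂ :=
  !![6, 0, 3, 0;
     5, 7, -7, 0]

/-- Coefficient matrix of
`|ψ₂⟩ = |0⟩⊗|1⟩ − |1⟩⊗|3⟩ + |1⟩⊗(|1⟩ − |2⟩)`. -/
noncomputable def ψ2 : Matrix (Fin 2) (Fin 4) ℂ :=
  !![0, 1, 0, 0;
     0, 1, -1, -1]

/-- The span of `ψ₀, ψ₁, ψ₂` in `ℂ² ⊗ ℂ⁴` contains no nonzero product vector. -/
theorem span_Omega_A_BC_contains_no_product_vector :
    ¬ ∃ (x₀ x₁ x₂ : ℂ) (u : Fin 2 → ℂ) (v : Fin 4 → ℂ),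
        (x₀ • ψ0 + x₁ • ψ1 + x₂ • ψ2) ≠ 0 ∧
        ∀ k l, (x₀ • ψ0 + x₁ • ψ1 + x₂ • ψ2) k l = u k * v l := by
  rintro ⟨a, b, c, u, v, hne, h⟩
  have h00 := h 0 0; have h01 := h 0 1; have h02 := h 0 2; have h03 := h 0 3
  have h10 := h 1 0; have h11 := h 1 1; have h12 := h 1 2; have h13 := h 1 3
  simp [ψ0, ψ1, ψ2] at h00 h01 h02 h03 h10 h11 h12 h13
  -- 2×2 minors vanish
  have E01 : (a+6*b)*(-3*a+7*b+c) - c*(5*b) = 0 := by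
    linear_combination (-3*a+7*b+c)*h00 + (u 0 * v 0)*h11 - (5*b)*h01 - (u 0 * v 1)*h10
  have E02 : (a+6*b)*(3*a-7*b-c) - (-2*a+3*b)*(5*b) = 0 := by
    linear_combination (3*a-7*b-c)*h00 + (u 0 * v 0)*h12 - (5*b)*h02 - (u 0 * v 2)*h10
  have E03 : (a+6*b)*(-c) - (-5*a)*(5*b) = 0 := by
    linear_combination (-c)*h00 + (u 0 * v 0)*h13 - (5*b)*h03 - (u 0 * v 3)*h10
  have E13 : c*(-c) - (-5*a)*(-3*a+7*b+c) = 0 := by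
    linear_combination (-c)*h01 + (u 0 * v 1)*h13 - (-3*a+7*b+c)*h03 - (u 0 * v 3)*h11
  have E23 : (-2*a+3*b)*(-c) - (-5*a)*(3*a-7*b-c) = 0 := by
    linear_combination (-c)*h02 + (u 0 * v 2)*h13 - (3*a-7*b-c)*h03 - (u 0 * v 3)*h12
  have hbt : b * (c - 2*a + 3*b) = 0 := by linear_combination (-1/5)*E01 + (-1/5)*E02
  have hct : c * (c - 2*a + 3*b) = 0 := by linear_combination -E13 - E23
  have key : a = 0 ∧ b = 0 ∧ c = 0 := by
    have tcase : c - 2*a + 3*b = 0 → a = 0 ∧ b = 0 ∧ c = 0 := by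
      intro ht
      have hc : c = 2*a - 3*b := by linear_combination ht
      subst hc
      have hb2 : b^2 = 0 := by linear_combination (-1/150)*E13 + (7/300)*E03 + (1/75)*E01
      have hb : b = 0 := by exact pow_eq_zero_iff (two_ne_zero) |>.mp hb2
      subst hb
      have ha2 : a^2 = 0 := by linear_combination (-1/9)*E13
      have ha : a = 0 := pow_eq_zero_iff (two_ne_zero) |>.mp ha2
      subst ha; exact ⟨rfl, rfl, by ring⟩
    rcases mul_eq_zero.mp hbt with hb | ht
    · rcases mul_eq_zero.mp hct with hc | ht
      · subst hb; subst hc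
        have ha2 : a^2 = 0 := by linear_combination (-1/15)*E13
        exact ⟨pow_eq_zero_iff (two_ne_zero) |>.mp ha2, rfl, rfl⟩
      · exact tcase ht
    · exact tcase ht
  obtain ⟨ha, hb, hc⟩ := key
  subst ha; subst hb; subst hc
  simp at hne
end
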